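/- Let X be a normal Hausdorff space. Then the spaces L(X), L₀(X), and MC(X), each equipped with the upper Vietoris topology τ_V⁺, are Baire spaces. -/

import Mathlib

open Set Topology TopologicalSpace

/-- The set of values of a set-valued map (identified with its graph) at a point. -/
def valuesAt {X : Type*} (F : Set (X × ℝ)) (x : X) : Set ℝ := {y | (x, y) ∈ F}

/-- A set-valued map (identified with its graph) is cusco: upper semicontinuous at every
point, with nonempty compact convex values. -/
def IsCusco {X : Type*} [TopologicalSpace X] (F : Set (X × ℝ)) : Prop :=
  (∀ x : X, ∀ V : Set ℝ, IsOpen V → valuesAt F x ⊆ V →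
    ∃ U : Set X, IsOpen U ∧ x ∈ U ∧ ∀ u ∈ U, valuesAt F u ⊆ V) ∧
  (∀ x : X, (valuesAt F x).Nonempty ∧ IsCompact (valuesAt F x) ∧ Convex ℝ (valuesAt F x))

/-- A minimal cusco map, i.e. a cusco map containing no proper cusco submap. -/
def IsMinimalCusco {X : Type*} [TopologicalSpace X] (F : Set (X × ℝ)) : Prop :=
  IsCusco F ∧ ∀ G : Set (X × ℝ), IsCusco G → G ⊆ F → G = F

/-- `L(X)`: all cusco maps from `X` to `ℝ`. -/
def LSet (X : Type*) [TopologicalSpace X] : Set (Set (X × ℝ)) := {F | IsCusco F}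

/-- `L₀(X)`: cusco maps that are single-valued at each isolated point. -/
def L0Set (X : Type*) [TopologicalSpace X] : Set (Set (X × ℝ)) :=
  {F | IsCusco F ∧ ∀ x : X, IsOpen ({x} : Set X) → ∃ y : ℝ, valuesAt F x = {y}}

/-- `MC(X)`: all minimal cusco maps from `X` to `ℝ`. -/
def MCSet (X : Type*) [TopologicalSpace X] : Set (Set (X × ℝ)) := {F | IsMinimalCusco F}

/-- The upper Vietoris topology on a family of subsets of `X × ℝ`. -/
def upperVietoris {X : Type*} [TopologicalSpace X] (S : Set (Set (X × ℝ))) :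
    TopologicalSpace S :=
  .generateFrom {U | ∃ W : Set (X × ℝ), IsOpen W ∧ U = {A : S | (A : Set (X × ℝ)) ⊆ W}}

/-- The Vietoris topology on a family of subsets of `X × ℝ`. -/
def vietoris {X : Type*} [TopologicalSpace X] (S : Set (Set (X × ℝ))) :
    TopologicalSpace S :=
  .generateFrom
    ({U | ∃ W : Set (X × ℝ), IsOpen W ∧ U = {A : S | (A : Set (X × ℝ)) ⊆ W}} ∪
     {U | ∃ W : Set (X × ℝ), IsOpen W ∧ U = {A : S | ((A : Set (X × ℝ)) ∩ W).Nonempty}})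

/-- The graph of a function `X → ℝ`. -/
def graphOf {X : Type*} (f : X → ℝ) : Set (X × ℝ) := {p | p.2 = f p.1}

/-- `X` is countably compact: every countable open cover has a finite subcover. -/
def CountablyCompact (X : Type*) [TopologicalSpace X] : Prop :=
  ∀ U : ℕ → Set X, (∀ n, IsOpen (U n)) → (⋃ n, U n) = Set.univ →
    ∃ t : Finset ℕ, (⋃ n ∈ t, U n) = Set.univ

/-
The three families consist of cusco maps and contain the graph of every continuous function.
On a normal space the Katětov–Tong insertion theorem, applied between the envelopes of the
component of `V x` that contains `F x`, gives a continuous function whose graph lies in a prescribed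
open set `V ⊇ F`; hence graphs of continuous functions meet every nonempty basic open set `W⁺`.
Given dense open sets `Gₙ`, one then chooses continuous `fₙ` and open `Vₙ ⊇ graph fₙ` with
`Vₙ₊₁⁺ ⊆ Gₙ`, each vertical section of `Vₙ₊₁` having its closure inside the section of `Vₙ` and
within `1/(n+1)` of `fₙ`. The `fₙ` converge uniformly to a continuous `f` whose graph lies in
every `Vₙ`, so it belongs to `W⁺ ∩ ⋂ Gₙ`.
-/

open Filter Metric

section Fibers

variable {X : Type*}

theorem valuesAt_graphOf (f : X → ℝ) (x : X) : valuesAt (graphOf f) x = {f x} :=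
  rfl

theorem graphOf_subset_iff {f : X → ℝ} {V : Set (X × ℝ)} :
    graphOf f ⊆ V ↔ ∀ x, (x, f x) ∈ V :=
  ⟨fun h x => h (show f x = f x from rfl), fun h ⟨x, y⟩ hy => by
    obtain rfl : y = f x := hy
    exact h x⟩

def FibersShrink (Q V : Set (X × ℝ)) (f : X → ℝ) (ε : ℝ) : Prop :=
  ∀ x, closure (valuesAt Q x) ⊆ valuesAt V x ∩ closedBall (f x) ε

theorem FibersShrink.mono {Q Q' V : Set (X × ℝ)} {f : X → ℝ} {ε : ℝ}
    (h : FibersShrink Q V f ε) (hQ : Q' ⊆ Q) : FibersShrink Q' V f ε :=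
  fun x => (closure_mono (show valuesAt Q' x ⊆ valuesAt Q x from fun _ hy => hQ hy)).trans (h x)

end Fibers

section Insertion

variable {X : Type*} [TopologicalSpace X]

section Interpolation

variable {ι : Type*} [LinearOrder ι]

/-- `W m` is the set attached to the index `e m`; only the first `n` of them are constrained. -/
def IsPartialInterpolation (A B : ι → Set X) (e : ℕ → ι) (n : ℕ) (W : ℕ → Set X) : Prop :=
  ∀ m < n, IsOpen (W m) ∧ A (e m) ⊆ W m ∧ closure (W m) ⊆ B (e m) ∧
    ∀ k < n, e m < e k → closure (W m) ⊆ W k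

theorem IsPartialInterpolation.congr {A B : ι → Set X} {e : ℕ → ι} {n : ℕ} {W W' : ℕ → Set X}
    (hW : IsPartialInterpolation A B e n W) (h : ∀ m < n, W' m = W m) :
    IsPartialInterpolation A B e n W' := by
  intro m hm
  simp only [h m hm]
  refine ⟨(hW m hm).1, (hW m hm).2.1, (hW m hm).2.2.1, fun k hk hmk => ?_⟩
  rw [h k hk]
  exact (hW m hm).2.2.2 k hk hmk

theorem IsPartialInterpolation.exists_update [NormalSpace X] {A B : ι → Set X}
    (hA : ∀ i, IsClosed (A i)) (hB : ∀ i, IsOpen (B i)) (hAm : Monotone A) (hBm : Monotone B)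
    (hAB : ∀ i, A i ⊆ B i) {e : ℕ → ι} {n : ℕ} {W : ℕ → Set X}
    (hW : IsPartialInterpolation A B e n W) :
    ∃ U, IsPartialInterpolation A B e (n + 1) (Function.update W n U) := by
  set C := A (e n) ∪ ⋃ m ∈ {m | m < n ∧ e m < e n}, closure (W m)
  set O := B (e n) ∩ ⋂ m ∈ {m | m < n ∧ e n < e m}, W m
  have hC : IsClosed C := (hA _).union <|
    ((finite_Iio n).subset fun _ hm => hm.1).isClosed_biUnion fun _ _ => isClosed_closure
  have hO : IsOpen O := (hB _).inter <|
    ((finite_Iio n).subset fun _ hm => hm.1).isOpen_biInter fun m hm => (hW m hm.1).1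
  have hCO : C ⊆ O := by
    rintro x (hx | hx)
    · exact ⟨hAB _ hx, mem_biInter fun m hm => (hW m hm.1).2.1 (hAm hm.2.le hx)⟩
    · obtain ⟨m, ⟨hmn, hmlt⟩, hxm⟩ := mem_iUnion₂.1 hx
      exact ⟨hBm hmlt.le ((hW m hmn).2.2.1 hxm),
        mem_biInter fun k hk => (hW m hmn).2.2.2 k hk.1 (hmlt.trans hk.2) hxm⟩
  obtain ⟨U, hU, hCU, hUO⟩ := normal_exists_closure_subset hC hO hCO
  have hnew : IsOpen U ∧ A (e n) ⊆ U ∧ closure U ⊆ B (e n) :=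
    ⟨hU, subset_union_left.trans hCU, hUO.trans inter_subset_left⟩
  refine ⟨U, fun m hm => ?_⟩
  rcases (Nat.lt_succ_iff_lt_or_eq.1 hm) with hm | rfl
  · simp only [Function.update_of_ne hm.ne]
    refine ⟨(hW m hm).1, (hW m hm).2.1, (hW m hm).2.2.1, fun k hk hmk => ?_⟩
    rcases (Nat.lt_succ_iff_lt_or_eq.1 hk) with hk | rfl
    · rw [Function.update_of_ne hk.ne]
      exact (hW m hm).2.2.2 k hk hmk
    · rw [Function.update_self]
      exact fun x hx => hCU (Or.inr (mem_biUnion ⟨hm, hmk⟩ hx))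
  · simp only [Function.update_self]
    refine ⟨hnew.1, hnew.2.1, hnew.2.2, fun k hk hmk => ?_⟩
    rcases (Nat.lt_succ_iff_lt_or_eq.1 hk) with hk | rfl
    · rw [Function.update_of_ne hk.ne]
      exact hUO.trans <| inter_subset_right.trans (biInter_subset_of_mem ⟨hk, hmk⟩)
    · exact absurd hmk (lt_irrefl _)

open Encodable in
theorem exists_isOpen_interpolating_family [NormalSpace X] [Denumerable ι] {A B : ι → Set X}
    (hA : ∀ i, IsClosed (A i)) (hB : ∀ i, IsOpen (B i)) (hAm : Monotone A) (hBm : Monotone B)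
    (hAB : ∀ i, A i ⊆ B i) :
    ∃ W : ι → Set X, (∀ i, IsOpen (W i)) ∧ (∀ i, A i ⊆ W i) ∧ (∀ i, closure (W i) ⊆ B i) ∧
      ∀ i j, i < j → closure (W i) ⊆ W j := by
  set e : ℕ → ι := Denumerable.ofNat ι
  choose! next hnext using fun n (W : ℕ → Set X) (hW : IsPartialInterpolation A B e n W) =>
    hW.exists_update hA hB hAm hBm hAB
  let stage : ℕ → ℕ → Set X := fun n =>
    Nat.rec (fun _ => ∅) (fun n W => Function.update W n (next n W)) n
  have hstage : ∀ n, IsPartialInterpolation A B e n (stage n) := by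
    intro n
    induction n with
    | zero => exact fun m hm => absurd hm (Nat.not_lt_zero m)
    | succ n ih => exact hnext n (stage n) ih
  have hstable : ∀ n, ∀ m < n, stage (m + 1) m = stage n m := by
    intro n
    induction n with
    | zero => exact fun m hm => absurd hm (Nat.not_lt_zero m)
    | succ n ih =>
      intro m hm
      rcases Nat.lt_succ_iff_lt_or_eq.1 hm with hm | rfl
      · exact (ih m hm).trans (Function.update_of_ne hm.ne _ _).symm
      · rfl
  have hlimit : ∀ n, IsPartialInterpolation A B e n (fun m => stage (m + 1) m) :=
    fun n => (hstage n).congr (hstable n)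
  refine ⟨fun i => stage (encode i + 1) (encode i), fun i => ?_, fun i => ?_, fun i => ?_,
    fun i j hij => ?_⟩
  · exact (hlimit _ _ (Nat.lt_succ_self _)).1
  · simpa [e] using (hlimit _ _ (Nat.lt_succ_self (encode i))).2.1
  · simpa [e] using (hlimit _ _ (Nat.lt_succ_self (encode i))).2.2.1
  · have := (hlimit (max (encode i) (encode j) + 1) (encode i)
      (Nat.lt_succ_of_le (le_max_left _ _))).2.2.2 (encode j) (Nat.lt_succ_of_le (le_max_right _ _))
    simpa [e, hij] using this

end Interpolation

/-- The Katětov–Tong insertion theorem. -/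
theorem exists_continuous_between_of_usc_lt_lsc [NormalSpace X] {L H : X → ℝ}
    (hL : UpperSemicontinuous L) (hH : LowerSemicontinuous H) (hLH : ∀ x, L x < H x) :
    ∃ f : X → ℝ, Continuous f ∧ ∀ x, L x ≤ f x ∧ f x ≤ H x := by
  obtain ⟨W, hWo, hHW, hWL, hWW⟩ := exists_isOpen_interpolating_family
    (A := fun q : ℚ => H ⁻¹' Iic q) (B := fun q : ℚ => L ⁻¹' Iio q)
    (fun q => hH.isClosed_preimage q)
    (fun q => upperSemicontinuous_iff_isOpen_preimage.1 hL q)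
    (fun p q hpq => preimage_mono (Iic_subset_Iic.2 (Rat.cast_le.2 hpq)))
    (fun p q hpq => preimage_mono (Iio_subset_Iio (Rat.cast_le.2 hpq)))
    (fun q x hx => (hLH x).trans_le hx)
  set levels : X → Set ℝ := fun x => (↑) '' {q : ℚ | x ∈ W q}
  set f : X → ℝ := fun x => sInf (levels x)
  have hW_of_le : ∀ x (q : ℚ), H x ≤ q → x ∈ W q := fun x q hq => hHW q hq
  have hL_lt : ∀ x (q : ℚ), x ∈ W q → L x < q := fun x q hx => hWL q (subset_closure hx)
  have hne : ∀ x, (levels x).Nonempty := fun x =>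
    let ⟨q, hq⟩ := exists_rat_gt (H x); ⟨q, q, hW_of_le x q hq.le, rfl⟩
  have hbdd : ∀ x, BddBelow (levels x) := fun x =>
    ⟨L x, by rintro _ ⟨q, hq, rfl⟩; exact (hL_lt x q hq).le⟩
  have hf_le : ∀ x (q : ℚ), x ∈ W q → f x ≤ q := fun x q hq => csInf_le (hbdd x) ⟨q, hq, rfl⟩
  have hf_usc : UpperSemicontinuous f := by
    intro x a hxa
    obtain ⟨_, ⟨q, hq, rfl⟩, hqa⟩ := exists_lt_of_csInf_lt (hne x) hxa
    filter_upwards [(hWo q).mem_nhds hq] with y hy using (hf_le y q hy).trans_lt hqa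
  have hf_lsc : LowerSemicontinuous f := by
    intro x a hax
    obtain ⟨p, hap, hpx⟩ := exists_rat_btwn hax
    obtain ⟨p', hpp', hp'x⟩ := exists_rat_btwn hpx
    have hx : x ∉ closure (W p) := fun hx =>
      (hf_le x p' (hWW p p' (Rat.cast_lt.1 hpp') hx)).not_gt hp'x
    filter_upwards [isClosed_closure.isOpen_compl.mem_nhds hx] with y hy
    refine hap.trans_le (le_csInf (hne y) ?_)
    rintro _ ⟨q, hq, rfl⟩
    refine Rat.cast_le.2 (not_lt.1 fun hqp => hy ?_)
    exact subset_closure (hWW q p hqp (subset_closure hq))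
  refine ⟨f, continuous_iff_lower_upperSemicontinuous.2 ⟨hf_lsc, hf_usc⟩, fun x => ⟨?_, ?_⟩⟩
  · exact le_csInf (hne x) (by rintro _ ⟨q, hq, rfl⟩; exact (hL_lt x q hq).le)
  · exact le_of_forall_lt_rat_imp_le fun q hq => hf_le x q (hW_of_le x q hq.le)

end Insertion

section Selection

variable {X : Type*} [TopologicalSpace X]

theorem isOpen_valuesAt {V : Set (X × ℝ)} (hV : IsOpen V) (x : X) : IsOpen (valuesAt V x) :=
  hV.preimage (continuous_const.prodMk continuous_id)

theorem exists_lowerSemicontinuous_Ico_subset_valuesAt {V : Set (X × ℝ)} (hV : IsOpen V) {b : ℝ}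
    (hb : ∀ p ∈ V, p.2 < b) {m M : X → ℝ} (hm : LowerSemicontinuous m) (hmM : ∀ x, m x ≤ M x)
    (hmMV : ∀ x, Icc (m x) (M x) ⊆ valuesAt V x) :
    ∃ g : X → ℝ, LowerSemicontinuous g ∧ (∀ x, M x < g x) ∧
      ∀ x, Ico (m x) (g x) ⊆ valuesAt V x := by
  -- `g x` is the upper end of the component of `valuesAt V x` containing `[m x, M x]`.
  set reach : X → Set ℝ := fun x => {t | Icc (m x) t ⊆ valuesAt V x}
  have hbdd : ∀ x, BddAbove (reach x) := fun x =>
    ⟨b, fun t ht => not_lt.1 fun hbt =>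
      (hb (x, b) (ht ⟨(hb (x, m x) (hmMV x ⟨le_rfl, hmM x⟩)).le, hbt.le⟩)).false⟩
  have hIco : ∀ x, Ico (m x) (sSup (reach x)) ⊆ valuesAt V x := fun x y hy =>
    let ⟨_, ht, hyt⟩ := exists_lt_of_lt_csSup ⟨M x, hmMV x⟩ hy.2
    ht ⟨hy.1, hyt.le⟩
  have hgt : ∀ x, M x < sSup (reach x) := by
    intro x
    obtain ⟨u, hMu, hu⟩ := exists_Ico_subset_of_mem_nhds
      ((isOpen_valuesAt hV x).mem_nhds (hmMV x ⟨hmM x, le_rfl⟩)) (exists_gt (M x))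
    obtain ⟨t, hMt, htu⟩ := exists_between hMu
    refine hMt.trans_le (le_csSup (hbdd x) fun y hy => ?_)
    rcases le_total y (M x) with hyM | hMy
    · exact hmMV x ⟨hy.1, hyM⟩
    · exact hu ⟨hMy, hy.2.trans_lt htu⟩
  refine ⟨fun x => sSup (reach x), fun x₀ c hc => ?_, hgt, hIco⟩
  obtain ⟨t, hct, htg⟩ := exists_between (max_lt hc (hgt x₀))
  obtain ⟨a, ham, ha⟩ := exists_Ioc_subset_of_mem_nhds
    ((isOpen_valuesAt hV x₀).mem_nhds (hmMV x₀ ⟨le_rfl, hmM x₀⟩)) (exists_lt (m x₀))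
  obtain ⟨a', haa', ha'm⟩ := exists_between ham
  have hseg : Icc a' t ⊆ valuesAt V x₀ := fun y hy => by
    rcases le_total y (m x₀) with hym | hmy
    · exact ha ⟨haa'.trans_le hy.1, hym⟩
    · exact hIco x₀ ⟨hmy, hy.2.trans_lt htg⟩
  have htube : ∀ᶠ u in 𝓝 x₀, Icc a' t ⊆ valuesAt V u :=
    isCompact_Icc.eventually_forall_of_forall_eventually fun y hy => hV.mem_nhds (hseg hy)
  filter_upwards [htube, hm x₀ a' ha'm] with u hu hmu
  refine (le_max_left _ _ |>.trans_lt hct).trans_le (le_csSup (hbdd u) fun y hy => ?_)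
  exact hu ⟨hmu.le.trans hy.1, hy.2⟩

theorem exists_upperSemicontinuous_Ioc_subset_valuesAt {V : Set (X × ℝ)} (hV : IsOpen V) {a : ℝ}
    (ha : ∀ p ∈ V, a < p.2) {m M : X → ℝ} (hM : UpperSemicontinuous M) (hmM : ∀ x, m x ≤ M x)
    (hmMV : ∀ x, Icc (m x) (M x) ⊆ valuesAt V x) :
    ∃ l : X → ℝ, UpperSemicontinuous l ∧ (∀ x, l x < m x) ∧
      ∀ x, Ioc (l x) (M x) ⊆ valuesAt V x := by
  have hV' : IsOpen ((fun p : X × ℝ => (p.1, -p.2)) ⁻¹' V) :=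
    hV.preimage (continuous_fst.prodMk continuous_snd.neg)
  obtain ⟨g, hg, hmg, hgV⟩ := exists_lowerSemicontinuous_Ico_subset_valuesAt hV' (b := -a)
    (fun p hp => lt_neg_of_lt_neg (ha _ hp))
    (continuous_neg.comp_upperSemicontinuous_antitone hM fun _ _ => neg_le_neg)
    (fun x => neg_le_neg (hmM x)) fun x y hy =>
      hmMV x ⟨le_neg_of_le_neg hy.2, neg_le_of_neg_le hy.1⟩
  refine ⟨fun x => -g x, continuous_neg.comp_lowerSemicontinuous_antitone hg
    fun _ _ => neg_le_neg, fun x => neg_lt_of_neg_lt (hmg x), fun x y hy => ?_⟩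
  simpa [valuesAt] using hgV x ⟨neg_le_neg hy.2, neg_lt.1 hy.1⟩

theorem exists_continuous_graphOf_subset_of_bounded [NormalSpace X] {V : Set (X × ℝ)}
    (hV : IsOpen V) {a b : ℝ} (hab : ∀ p ∈ V, p.2 ∈ Ioo a b) {m M : X → ℝ}
    (hm : LowerSemicontinuous m) (hM : UpperSemicontinuous M) (hmM : ∀ x, m x ≤ M x)
    (hmMV : ∀ x, Icc (m x) (M x) ⊆ valuesAt V x) :
    ∃ f : X → ℝ, Continuous f ∧ graphOf f ⊆ V := by
  obtain ⟨l, hl, hlm, hlV⟩ :=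
    exists_upperSemicontinuous_Ioc_subset_valuesAt hV (fun p hp => (hab p hp).1) hM hmM hmMV
  obtain ⟨g, hg, hMg, hgV⟩ :=
    exists_lowerSemicontinuous_Ico_subset_valuesAt hV (fun p hp => (hab p hp).2) hm hmM hmMV
  obtain ⟨f, hf, hfb⟩ := exists_continuous_between_of_usc_lt_lsc (hl.add hM) (hm.add hg)
    fun x => add_lt_add (hlm x) (hMg x)
  refine ⟨fun x => f x / 2, hf.div_const 2, graphOf_subset_iff.2 fun x => ?_⟩
  -- `f x / 2 ∈ (l x, g x) = (l x, M x] ∪ [m x, g x)`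
  have := hlm x; have := hmM x; have := hMg x; have := hfb x
  rcases le_or_gt (f x / 2) (M x) with hfM | hMf
  · exact hlV x ⟨by linarith, hfM⟩
  · exact hgV x ⟨by linarith, by linarith⟩

open Real in
theorem exists_continuous_graphOf_subset [NormalSpace X] {V : Set (X × ℝ)} (hV : IsOpen V)
    {m M : X → ℝ} (hm : LowerSemicontinuous m) (hM : UpperSemicontinuous M)
    (hmM : ∀ x, m x ≤ M x) (hmMV : ∀ x, Icc (m x) (M x) ⊆ valuesAt V x) :
    ∃ f : X → ℝ, Continuous f ∧ graphOf f ⊆ V := by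
  -- `arctan` moves `V` into a horizontal strip, where the envelopes of the bounded case are finite.
  set strip : Set ℝ := Ioo (-(π / 2)) (π / 2)
  have htan : ContinuousOn (fun p : X × ℝ => (p.1, tan p.2)) (Prod.snd ⁻¹' strip) :=
    continuousOn_fst.prodMk (continuousOn_tan_Ioo.comp continuousOn_snd fun _ hp => hp)
  obtain ⟨f, hf, hfV⟩ := exists_continuous_graphOf_subset_of_bounded
    (htan.isOpen_inter_preimage (isOpen_Ioo.preimage continuous_snd) hV) (fun p hp => hp.1)
    (continuous_arctan.comp_lowerSemicontinuous hm arctan_strictMono.monotone)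
    (continuous_arctan.comp_upperSemicontinuous hM arctan_strictMono.monotone)
    (fun x => arctan_strictMono.monotone (hmM x)) fun x y hy => by
      have hy' : y ∈ strip := ⟨(neg_pi_div_two_lt_arctan _).trans_le hy.1,
        hy.2.trans_lt (arctan_lt_pi_div_two _)⟩
      refine ⟨hy', hmMV x ⟨?_, ?_⟩⟩
      · simpa using strictMonoOn_tan.monotoneOn (arctan_mem_Ioo _) hy' hy.1
      · simpa using strictMonoOn_tan.monotoneOn hy' (arctan_mem_Ioo _) hy.2
  exact ⟨fun x => tan (f x), continuousOn_tan_Ioo.comp_continuous hf fun x =>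
    (graphOf_subset_iff.1 hfV x).1, graphOf_subset_iff.2 fun x => (graphOf_subset_iff.1 hfV x).2⟩

end Selection

namespace IsCusco

variable {X : Type*} [TopologicalSpace X] {F : Set (X × ℝ)}

theorem valuesAt_eq_Icc (hF : IsCusco F) (x : X) :
    valuesAt F x = Icc (sInf (valuesAt F x)) (sSup (valuesAt F x)) := by
  obtain ⟨hne, hcpt, hcvx⟩ := hF.2 x
  exact (subset_Icc_csInf_csSup hcpt.bddBelow hcpt.bddAbove).antisymm
    (hcvx.ordConnected.out (hcpt.sInf_mem hne) (hcpt.sSup_mem hne))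

theorem upperSemicontinuous_sSup (hF : IsCusco F) :
    UpperSemicontinuous fun x => sSup (valuesAt F x) := by
  intro x₀ c hc
  obtain ⟨U, hU, hx₀, hUF⟩ := hF.1 x₀ (Iio c) isOpen_Iio fun y hy =>
    (le_csSup (hF.2 x₀).2.1.bddAbove hy).trans_lt hc
  filter_upwards [hU.mem_nhds hx₀] with u hu
  exact hUF u hu ((hF.2 u).2.1.sSup_mem (hF.2 u).1)

theorem lowerSemicontinuous_sInf (hF : IsCusco F) :
    LowerSemicontinuous fun x => sInf (valuesAt F x) := by
  intro x₀ c hc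
  obtain ⟨U, hU, hx₀, hUF⟩ := hF.1 x₀ (Ioi c) isOpen_Ioi fun y hy =>
    hc.trans_le (csInf_le (hF.2 x₀).2.1.bddBelow hy)
  filter_upwards [hU.mem_nhds hx₀] with u hu
  exact hUF u hu ((hF.2 u).2.1.sInf_mem (hF.2 u).1)

theorem exists_continuous_graphOf_subset [NormalSpace X] (hF : IsCusco F) {V : Set (X × ℝ)}
    (hV : IsOpen V) (hFV : F ⊆ V) : ∃ f : X → ℝ, Continuous f ∧ graphOf f ⊆ V :=
  _root_.exists_continuous_graphOf_subset hV hF.lowerSemicontinuous_sInf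
    hF.upperSemicontinuous_sSup
    (fun x => let ⟨hne, hcpt, _⟩ := hF.2 x; csInf_le_csSup hne hcpt.bddBelow hcpt.bddAbove)
    fun x => (hF.valuesAt_eq_Icc x).symm.subset.trans fun _ hy => hFV hy

end IsCusco

section Graph

variable {X : Type*} [TopologicalSpace X] {f : X → ℝ}

theorem isCusco_graphOf (hf : Continuous f) : IsCusco (graphOf f) := by
  refine ⟨fun x V hV hxV => ⟨f ⁻¹' V, hV.preimage hf, hxV rfl, fun u hu => ?_⟩, fun x => ?_⟩
  · simpa [valuesAt_graphOf] using hu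
  · rw [valuesAt_graphOf]
    exact ⟨singleton_nonempty _, isCompact_singleton, convex_singleton _⟩

theorem isMinimalCusco_graphOf (hf : Continuous f) : IsMinimalCusco (graphOf f) := by
  refine ⟨isCusco_graphOf hf, fun G hG hGf => hGf.antisymm ?_⟩
  rintro ⟨x, y⟩ (rfl : y = f x)
  obtain ⟨z, hz⟩ := (hG.2 x).1
  obtain rfl : z = f x := hGf hz
  exact hz

end Graph

section Baire

variable {X : Type*} [TopologicalSpace X]

theorem exists_isOpen_graphOf_subset_fibersShrink {f : X → ℝ} (hf : Continuous f)
    {V : Set (X × ℝ)} (hV : IsOpen V) (hfV : graphOf f ⊆ V) {ε : ℝ} (hε : 0 < ε) :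
    ∃ Q, IsOpen Q ∧ graphOf f ⊆ Q ∧ FibersShrink Q V f ε := by
  -- Doubling the radius puts the closure of every vertical section of `Q` inside `V`.
  set Q : Set (X × ℝ) := ⋃ t ≤ ε,
    {p | dist p.2 (f p.1) < t ∧ ∀ᶠ u in 𝓝 p.1, closedBall (f u) (2 * t) ⊆ valuesAt V u}
  refine ⟨Q, isOpen_biUnion fun t _ => ?_, graphOf_subset_iff.2 fun x => ?_, fun x y hy => ?_⟩
  · exact (isOpen_lt (continuous_snd.dist (hf.comp continuous_fst)) continuous_const).inter
      (isOpen_setOfPred_eventually_nhds.preimage continuous_fst)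
  · obtain ⟨r, hr, hrV⟩ := Metric.nhds_basis_closedBall.mem_iff.1
      ((isOpen_valuesAt hV x).mem_nhds (graphOf_subset_iff.1 hfV x))
    have ht : 0 < min (r / 3) ε := lt_min (by positivity) hε
    have htube : ∀ᶠ u in 𝓝 x, closedBall (f x) r ⊆ valuesAt V u :=
      (isCompact_closedBall _ _).eventually_forall_of_forall_eventually
        (P := fun u y => (u, y) ∈ V) fun y hy => hV.mem_nhds (hrV hy)
    refine mem_iUnion₂.2 ⟨_, min_le_right _ _, (dist_self _).trans_lt ht, ?_⟩
    filter_upwards [htube, Metric.tendsto_nhds.1 hf.continuousAt _ ht] with u hu hfu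
    refine (closedBall_subset_closedBall' ?_).trans hu
    linarith [min_le_left (r / 3) ε]
  · have hQx : ∀ y' ∈ valuesAt Q x, ∃ t ≤ ε, dist y' (f x) < t ∧
        closedBall (f x) (2 * t) ⊆ valuesAt V x := fun y' hy' =>
      let ⟨t, ht, hdist, hev⟩ := mem_iUnion₂.1 hy'
      ⟨t, ht, hdist, hev.self_of_nhds⟩
    refine ⟨?_, closure_minimal (fun y' hy' => ?_) isClosed_closedBall hy⟩
    · rcases (dist_nonneg (x := y) (y := f x)).eq_or_lt with hd | hd
      · rw [dist_eq_zero.1 hd.symm]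
        exact graphOf_subset_iff.1 hfV x
      · obtain ⟨y', hy', hyy'⟩ := Metric.mem_closure_iff.1 hy _ (half_pos hd)
        obtain ⟨t, -, hy't, htV⟩ := hQx y' hy'
        exact htV (mem_closedBall.2 (by linarith [dist_triangle y y' (f x)]))
    · obtain ⟨t, htε, hy't, -⟩ := hQx y' hy'
      exact mem_closedBall.2 (hy't.le.trans htε)

theorem exists_continuous_graphOf_subset_of_fibersShrink {V : ℕ → Set (X × ℝ)}
    {f : ℕ → X → ℝ} {ε : ℕ → ℝ} (hε : Tendsto ε atTop (𝓝 0)) (hf : ∀ n, Continuous (f n))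
    (hfV : ∀ n, graphOf (f n) ⊆ V n) (hV : ∀ n, FibersShrink (V (n + 1)) (V n) (f n) (ε n)) :
    ∃ g : X → ℝ, Continuous g ∧ ∀ n, graphOf g ⊆ V n := by
  have hanti : ∀ x, Antitone fun n => valuesAt (V n) x := fun x =>
    antitone_nat_of_succ_le fun n => subset_closure.trans ((hV n x).trans inter_subset_left)
  have hfar : ∀ x n k, n < k → f k x ∈ valuesAt (V (n + 1)) x := fun x n k hnk =>
    hanti x hnk (graphOf_subset_iff.1 (hfV k) x)
  have hsmall : ∀ δ > 0, ∀ᶠ n in atTop, ε n < δ := fun δ hδ =>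
    hε.eventually (gt_mem_nhds hδ)
  have hcauchy : ∀ x, CauchySeq fun n => f n x := fun x => Metric.cauchySeq_iff'.2 fun δ hδ => by
    obtain ⟨N, hN⟩ := (hsmall δ hδ).exists
    refine ⟨N, fun n hn => ?_⟩
    rcases hn.eq_or_lt with rfl | hn
    · simpa using hδ
    · exact (subset_closure.trans (hV N x) (hfar x N n hn)).2.trans_lt hN
  choose g hg using fun x => cauchySeq_tendsto_of_complete (hcauchy x)
  have hgV : ∀ n x, g x ∈ valuesAt (V n) x ∩ closedBall (f n x) (ε n) := fun n x =>
    hV n x (mem_closure_of_tendsto (hg x) ((eventually_gt_atTop n).mono (hfar x n)))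
  have hunif : TendstoUniformly f g atTop := Metric.tendstoUniformly_iff.2 fun δ hδ => by
    filter_upwards [hsmall δ hδ] with n hn x using (mem_closedBall.1 (hgV n x).2).trans_lt hn
  exact ⟨g, hunif.continuous (Eventually.of_forall hf).frequently,
    fun n => graphOf_subset_iff.2 fun x => (hgV n x).1⟩

variable (S : Set (Set (X × ℝ)))

theorem isTopologicalBasis_upperVietoris :
    @IsTopologicalBasis S (upperVietoris S)
      {U | ∃ W : Set (X × ℝ), IsOpen W ∧ U = {A : S | (A : Set (X × ℝ)) ⊆ W}} :=
  @isTopologicalBasis_of_subbasis_of_finiteInter _ (upperVietoris S) _ rfl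
    ⟨⟨univ, isOpen_univ, by simp⟩, by
      rintro _ ⟨W, hW, rfl⟩ _ ⟨W', hW', rfl⟩
      exact ⟨W ∩ W', hW.inter hW', by ext; simp [subset_inter_iff]⟩⟩

variable {S}

theorem exists_fibersShrink_subset_of_dense [NormalSpace X] (hS : ∀ F ∈ S, IsCusco F)
    (hgraph : ∀ f, Continuous f → graphOf f ∈ S) {G : Set S} (hG : IsOpen[upperVietoris S] G)
    (hGd : @Dense S (upperVietoris S) G) {V : Set (X × ℝ)} (hV : IsOpen V) {f : X → ℝ}
    (hf : Continuous f) (hfV : graphOf f ⊆ V) {ε : ℝ} (hε : 0 < ε) :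
    ∃ V' f', (IsOpen V' ∧ Continuous f' ∧ graphOf f' ⊆ V') ∧
      (∀ A : S, (A : Set (X × ℝ)) ⊆ V' → A ∈ G) ∧ FibersShrink V' V f ε := by
  let _ := upperVietoris S
  have hB := isTopologicalBasis_upperVietoris S
  obtain ⟨Q, hQ, hfQ, hQV⟩ := exists_isOpen_graphOf_subset_fibersShrink hf hV hfV hε
  obtain ⟨A, hAQ, hAG⟩ := hGd.inter_open_nonempty _ (hB.isOpen ⟨Q, hQ, rfl⟩)
    ⟨⟨graphOf f, hgraph f hf⟩, hfQ⟩
  obtain ⟨_, ⟨W, hW, rfl⟩, hAW, hWG⟩ := hB.exists_subset_of_mem_open hAG hG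
  obtain ⟨f', hf', hf'QW⟩ :=
    (hS A A.2).exists_continuous_graphOf_subset (hQ.inter hW) (subset_inter hAQ hAW)
  exact ⟨Q ∩ W, f', ⟨hQ.inter hW, hf', hf'QW⟩, fun A' hA' => hWG (hA'.trans inter_subset_right),
    hQV.mono inter_subset_left⟩

theorem baireSpace_upperVietoris [NormalSpace X] (hS : ∀ F ∈ S, IsCusco F)
    (hgraph : ∀ f, Continuous f → graphOf f ∈ S) : @BaireSpace S (upperVietoris S) := by
  let _ := upperVietoris S
  refine ⟨fun G hGo hGd => (isTopologicalBasis_upperVietoris S).dense_iff.2 ?_⟩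
  rintro _ ⟨W₀, hW₀, rfl⟩ ⟨A₀, hA₀⟩
  obtain ⟨f₀, hf₀, hf₀W₀⟩ := (hS A₀ A₀.2).exists_continuous_graphOf_subset hW₀ hA₀
  choose! V' f' hgood hV'G hshrink using
    fun n (V : Set (X × ℝ)) (f : X → ℝ) (h : IsOpen V ∧ Continuous f ∧ graphOf f ⊆ V) =>
    exists_fibersShrink_subset_of_dense hS hgraph (hGo n) (hGd n) h.1 h.2.1 h.2.2
      (ε := 1 / ((n : ℝ) + 1)) (by positivity)
  let stage : ℕ → Set (X × ℝ) × (X → ℝ) := fun n =>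
    Nat.rec (W₀, f₀) (fun n p => (V' n p.1 p.2, f' n p.1 p.2)) n
  have hstage : ∀ n, IsOpen (stage n).1 ∧ Continuous (stage n).2 ∧
      graphOf (stage n).2 ⊆ (stage n).1 := by
    intro n
    induction n with
    | zero => exact ⟨hW₀, hf₀, hf₀W₀⟩
    | succ n ih => exact hgood n _ _ ih
  obtain ⟨g, hg, hgV⟩ := exists_continuous_graphOf_subset_of_fibersShrink
    tendsto_one_div_add_atTop_nhds_zero_nat (fun n => (hstage n).2.1) (fun n => (hstage n).2.2)
    fun n => hshrink n _ _ (hstage n)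
  exact ⟨⟨graphOf g, hgraph g hg⟩, hgV 0,
    mem_iInter.2 fun n => hV'G n _ _ (hstage n) _ (hgV (n + 1))⟩

end Baire

theorem baire_upperVietoris_general {X : Type*} [TopologicalSpace X]
    [NormalSpace X] :
    (@BaireSpace _ (upperVietoris (LSet X))) ∧
    (@BaireSpace _ (upperVietoris (L0Set X))) ∧
    (@BaireSpace _ (upperVietoris (MCSet X))) :=
  ⟨baireSpace_upperVietoris (fun _ hF => hF) fun _ hf => isCusco_graphOf hf,
    baireSpace_upperVietoris (fun _ hF => hF.1) fun f hf =>
      ⟨isCusco_graphOf hf, fun x _ => ⟨f x, valuesAt_graphOf f x⟩⟩,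
    baireSpace_upperVietoris (fun _ hF => hF.1) fun _ hf => isMinimalCusco_graphOf hf⟩

/-- For normal Hausdorff `X`, the spaces `(L(X), τ_V⁺)`, `(L₀(X), τ_V⁺)` and
`(MC(X), τ_V⁺)` are Baire spaces. -/
theorem baire_upperVietoris {X : Type*} [TopologicalSpace X] [T2Space X]
    [NormalSpace X] :
    (@BaireSpace _ (upperVietoris (LSet X))) ∧
    (@BaireSpace _ (upperVietoris (L0Set X))) ∧
    (@BaireSpace _ (upperVietoris (MCSet X))) :=
  baire_upperVietoris_general
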